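/- Let A, B, C, D be square-integrable real random variables on a probability space with E[C] ≠ 0 and E[A] ≠ 0, set R = E[A]/E[C], and suppose Cov(B, D)² < Var(B) · Var(D). Define f : ℝ² → ℝ by f(α, β) = Var(A) + α²Var(B) − 2α Cov(A, B) + R²Var(C) + β²R²Var(D) − 2βR² Cov(C, D) − 2R Cov(A, C) + 2αR Cov(B, C) + 2βR Cov(A, D) − 2αβR Cov(B, D), and let (α_o, β_o) be its unique global minimizer. Then f(α_o, β_o) − f(0, 0) = − Var((R Cov(B, C) − Cov(A, B)) · D − (R Cov(C, D) − Cov(A, D)) · B) / (Var(B)Var(D) − Cov(B, D)²); in particular f(α_o, β_o) ≤ f(0, 0). -/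

import Mathlib

open MeasureTheory ProbabilityTheory

/-- Covariance of two real random variables: `Cov(X, Y) = E[(X − E[X])(Y − E[Y])]`. -/
noncomputable def covar {Ω : Type*} [MeasurableSpace Ω] (μ : Measure Ω) (X Y : Ω → ℝ) : ℝ :=
  ∫ ω, (X ω - ∫ x, X x ∂μ) * (Y ω - ∫ x, Y x ∂μ) ∂μ

/-- Variance of a real random variable: `Var(X) = Cov(X, X)`. -/
noncomputable def Var {Ω : Type*} [MeasurableSpace Ω] (μ : Measure Ω) (X : Ω → ℝ) : ℝ :=
  covar μ X X

section aux
variable {Ω : Type*} [MeasurableSpace Ω] {μ : Measure Ω}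

lemma memLp_int_mul {f g : Ω → ℝ} (hf : MemLp f 2 μ) (hg : MemLp g 2 μ) :
    Integrable (fun ω => f ω * g ω) μ := by
  have h : (fun ω => f ω * g ω)
      = fun ω => ((f ω + g ω) ^ 2 - f ω ^ 2 - g ω ^ 2) / 2 := funext fun ω => by ring
  rw [h]
  exact (((hf.add hg).integrable_sq.sub hf.integrable_sq).sub hg.integrable_sq).div_const 2

lemma var_nonneg (μ : Measure Ω) (X : Ω → ℝ) : 0 ≤ Var μ X :=
  integral_nonneg fun ω => mul_self_nonneg _

lemma var_lin [IsProbabilityMeasure μ] {B D : Ω → ℝ} (hB : MemLp B 2 μ) (hD : MemLp D 2 μ)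
    (x y : ℝ) :
    Var μ (fun ω => x * D ω - y * B ω)
      = x ^ 2 * Var μ D - 2 * x * y * covar μ B D + y ^ 2 * Var μ B := by
  have hBi : Integrable B μ := hB.integrable one_le_two
  have hDi : Integrable D μ := hD.integrable one_le_two
  set mB := ∫ ω, B ω ∂μ with hmB
  set mD := ∫ ω, D ω ∂μ with hmD
  have hB' : MemLp (fun ω => B ω - mB) 2 μ := hB.sub (memLp_const mB)
  have hD' : MemLp (fun ω => D ω - mD) 2 μ := hD.sub (memLp_const mD)
  have iDD : Integrable (fun ω => (D ω - mD) * (D ω - mD)) μ := memLp_int_mul hD' hD'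
  have iBD : Integrable (fun ω => (B ω - mB) * (D ω - mD)) μ := memLp_int_mul hB' hD'
  have iBB : Integrable (fun ω => (B ω - mB) * (B ω - mB)) μ := memLp_int_mul hB' hB'
  have hm : (∫ ω, (x * D ω - y * B ω) ∂μ) = x * mD - y * mB := by
    rw [integral_sub (hDi.const_mul x) (hBi.const_mul y), integral_const_mul, integral_const_mul]
  unfold Var covar
  rw [hm]
  have h1 : (∫ ω, ((x * D ω - y * B ω - (x * mD - y * mB)) *
      (x * D ω - y * B ω - (x * mD - y * mB))) ∂μ)
      = ∫ ω, (x ^ 2 * ((D ω - mD) * (D ω - mD))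
        - 2 * x * y * ((B ω - mB) * (D ω - mD))
        + y ^ 2 * ((B ω - mB) * (B ω - mB))) ∂μ := by
    congr 1; funext ω; ring
  have i1 : Integrable (fun ω => x ^ 2 * ((D ω - mD) * (D ω - mD))
      - 2 * x * y * ((B ω - mB) * (D ω - mD))) μ :=
    (iDD.const_mul (x ^ 2)).sub (iBD.const_mul (2 * x * y))
  rw [h1, integral_add i1 (iBB.const_mul (y ^ 2)),
    integral_sub (iDD.const_mul (x ^ 2)) (iBD.const_mul (2 * x * y)),
    integral_const_mul, integral_const_mul, integral_const_mul]

lemma coeff_zero (a c : ℝ) (ha : 0 < a) (h : ∀ t : ℝ, 0 ≤ a * t ^ 2 + c * t) : c = 0 := by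
  have hx : 2 * a * (-c / (2 * a)) = -c := by field_simp
  have h1 := h (-c / (2 * a))
  nlinarith [sq_nonneg (-c / (2 * a)), sq_nonneg c]

end aux

/-- Variance reduction of the CV/CV estimator at its unique global minimizer:
`f(α_o, β_o) − f(0,0) = −Var((RCov(B,C) − Cov(A,B))·D − (RCov(C,D) − Cov(A,D))·B)
/ (Var(B)Var(D) − Cov(B,D)²) ≤ 0`. -/
theorem cv_cv_variance_reduction_optimal {Ω : Type*} [MeasurableSpace Ω]
    (μ : Measure Ω) [IsProbabilityMeasure μ]
    (A B C D : Ω → ℝ)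
    (hA : MemLp A 2 μ) (hB : MemLp B 2 μ) (hC : MemLp C 2 μ) (hD : MemLp D 2 μ)
    (hEC : (∫ x, C x ∂μ) ≠ 0) (hEA : (∫ x, A x ∂μ) ≠ 0)
    (R : ℝ) (hR : R = (∫ x, A x ∂μ) / (∫ x, C x ∂μ))
    (hBD : covar μ B D ^ 2 < Var μ B * Var μ D)
    (f : ℝ → ℝ → ℝ)
    (hf : ∀ α β : ℝ, f α β = Var μ A + α ^ 2 * Var μ B - 2 * α * covar μ A B
      + R ^ 2 * Var μ C + β ^ 2 * R ^ 2 * Var μ D - 2 * β * R ^ 2 * covar μ C D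
      - 2 * R * covar μ A C + 2 * α * R * covar μ B C + 2 * β * R * covar μ A D
      - 2 * α * β * R * covar μ B D)
    (αo βo : ℝ) (hmin : ∀ α β : ℝ, f αo βo ≤ f α β) :
    f αo βo - f 0 0
        = -(Var μ (fun ω => (R * covar μ B C - covar μ A B) * D ω
              - (R * covar μ C D - covar μ A D) * B ω))
          / (Var μ B * Var μ D - covar μ B D ^ 2)
      ∧ f αo βo ≤ f 0 0 := by
  set vB := Var μ B with hvBdef
  set vD := Var μ D with hvDdef
  set cBD := covar μ B D with hcBDdef
  set cAB := covar μ A B with hcABdef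
  set cBC := covar μ B C with hcBCdef
  set cCD := covar μ C D with hcCDdef
  set cAD := covar μ A D with hcADdef
  have hvB : 0 < vB := by nlinarith [var_nonneg μ B, var_nonneg μ D, sq_nonneg cBD]
  have hvD : 0 < vD := by nlinarith [var_nonneg μ B, var_nonneg μ D, sq_nonneg cBD]
  have hΔ : 0 < vB * vD - cBD ^ 2 := by linarith
  have hRne : R ≠ 0 := hR ▸ div_ne_zero hEA hEC
  have hR2 : 0 < R ^ 2 * vD :=
    mul_pos ((sq_nonneg R).lt_of_ne (Ne.symm (pow_ne_zero 2 hRne))) hvD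
  -- stationarity in α
  have e1 : 2 * vB * αo - 2 * cAB + 2 * R * cBC - 2 * R * cBD * βo = 0 := by
    apply coeff_zero vB _ hvB
    intro t
    have h := hmin (αo + t) βo
    have hE : f (αo + t) βo - f αo βo
        = vB * t ^ 2 + (2 * vB * αo - 2 * cAB + 2 * R * cBC - 2 * R * cBD * βo) * t := by
      rw [hf, hf]; ring
    linarith
  -- stationarity in β
  have e2' : 2 * R ^ 2 * vD * βo - 2 * R ^ 2 * cCD + 2 * R * cAD - 2 * R * cBD * αo = 0 := by
    apply coeff_zero (R ^ 2 * vD) _ hR2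
    intro t
    have h := hmin αo (βo + t)
    have hE : f αo (βo + t) - f αo βo
        = R ^ 2 * vD * t ^ 2
          + (2 * R ^ 2 * vD * βo - 2 * R ^ 2 * cCD + 2 * R * cAD - 2 * R * cBD * αo) * t := by
      rw [hf, hf]; ring
    linarith
  have e2 : R * vD * βo - R * cCD + cAD - cBD * αo = 0 :=
    mul_left_cancel₀ hRne (by linear_combination e2' / 2)
  have hV : Var μ (fun ω => (R * cBC - cAB) * D ω - (R * cCD - cAD) * B ω)
      = (R * cBC - cAB) ^ 2 * vD - 2 * (R * cBC - cAB) * (R * cCD - cAD) * cBD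
        + (R * cCD - cAD) ^ 2 * vB := var_lin hB hD _ _
  have key : f αo βo - f 0 0
      = -(Var μ (fun ω => (R * cBC - cAB) * D ω - (R * cCD - cAD) * B ω))
        / (vB * vD - cBD ^ 2) := by
    rw [hV, hf, hf, eq_div_iff hΔ.ne']
    linear_combination
      (((αo * (vB * vD - cBD ^ 2) - (cAB - R * cBC) * vD - (R * cCD - cAD) * cBD) / 2) * e1)
      + ((R * βo * (vB * vD - cBD ^ 2) - (cAB - R * cBC) * cBD - (R * cCD - cAD) * vB) * e2)
  refine ⟨key, ?_⟩
  have hVn : 0 ≤ Var μ (fun ω => (R * cBC - cAB) * D ω - (R * cCD - cAD) * B ω) :=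
    var_nonneg μ _
  have : 0 ≤ Var μ (fun ω => (R * cBC - cAB) * D ω - (R * cCD - cAD) * B ω)
      / (vB * vD - cBD ^ 2) := div_nonneg hVn hΔ.le
  rw [neg_div] at key
  linarith
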